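/- arXiv:1708.08101 — 14 statements merged into one kernel-verified Lean document; each statement's English description precedes it below -/
import Mathlib

section
/- Fix an integer k ≥ 1 and let ε := 1/((k+1/2)π). Define F(μ, B) := ε·μ + (−1)^k·exp(−μ) − (1/(2B))·(1 + exp(−π·ε·μ)) for real μ and real B ≠ 0, and set B₀ := (−1)^k. Then the partial derivative ∂F/∂μ at (0, B₀) is nonzero; in fact 1 − (π/2 + B₀)·ε > 0, and the implicit derivative μ'(B₀) = −(∂F/∂B)/(∂F/∂μ) evaluated at (0, B₀) satisfies μ'(B₀)·(1 − (π/2 + B₀)·ε) = B₀, so that sign(μ'(B₀)) = (−1)^k. In particular the zero eigenvalue at B = B₀ is simple and its continuation μ(B) crosses zero with strictly positive speed in the direction of larger |B|. -/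
open Real

/-!
At `μ = 0` the characteristic function equals `B₀ - 1/B` near `B = B₀ = ±1`, so `∂F/∂B = 1`,
while `∂F/∂μ = ε - B₀ + π ε/(2B₀) = -B₀ (1 - (π/2 + B₀) ε)` because `B₀² = 1`. The factor
`1 - (π/2 + B₀) ε` is positive since `π/2 + B₀ < (k + 1/2) π` as soon as `k ≥ 1`. Hence
`μ'(B₀) = B₀ / (1 - (π/2 + B₀) ε)`, which has the sign of `B₀ = (-1)^k`.
-/

noncomputable def charFun (ε s μ B : ℝ) : ℝ :=
  ε * μ + s * exp (-μ) - 1 / (2 * B) * (1 + exp (-(π * ε * μ)))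

theorem hasDerivAt_charFun_fst (ε s B : ℝ) :
    HasDerivAt (fun μ => charFun ε s μ B) (ε - s + π * ε / (2 * B)) 0 := by
  have hexp : HasDerivAt (fun μ : ℝ => exp (-μ)) (-1) 0 := by
    simpa using (hasDerivAt_neg (0 : ℝ)).exp
  have hexp_scaled : HasDerivAt (fun μ : ℝ => exp (-(π * ε * μ))) (-(π * ε)) 0 := by
    simpa using (((hasDerivAt_id (0 : ℝ)).const_mul (π * ε)).neg).exp
  exact ((((hasDerivAt_id' (0 : ℝ)).const_mul ε).add (hexp.const_mul s)).sub
    ((hexp_scaled.const_add 1).const_mul (1 / (2 * B)))).congr_deriv (by ring)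

theorem charFun_zero (ε s B : ℝ) : charFun ε s 0 B = s - B⁻¹ := by
  simp only [charFun, mul_zero, neg_zero, exp_zero, zero_add, mul_one]
  ring

theorem hasDerivAt_charFun_snd (ε s : ℝ) {B : ℝ} (hB : B ≠ 0) :
    HasDerivAt (fun B => charFun ε s 0 B) (B ^ 2)⁻¹ B := by
  simp only [charFun_zero]
  simpa using ((hasDerivAt_inv hB).const_sub s)

theorem pi_div_two_add_mul_one_div_lt_one {k : ℕ} (hk : 1 ≤ k) {s : ℝ} (hs : s ≤ 1) :
    (π / 2 + s) * (1 / ((k + 1 / 2) * π)) < 1 := by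
  have hkπ : π ≤ k * π := le_mul_of_one_le_left pi_pos.le (by exact_mod_cast hk)
  rw [mul_one_div, div_lt_one (by positivity)]
  linarith [pi_gt_three]

theorem Real.sign_div_of_pos (r : ℝ) {d : ℝ} (hd : 0 < d) : sign (r / d) = sign r := by
  rcases lt_trichotomy r 0 with hr | rfl | hr
  · rw [sign_of_neg hr, sign_of_neg (div_neg_of_neg_of_pos hr hd)]
  · rw [zero_div]
  · rw [sign_of_pos hr, sign_of_pos (div_pos hr hd)]

theorem Real.sign_neg_one_pow (k : ℕ) : sign ((-1 : ℝ) ^ k) = (-1) ^ k := by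
  rcases neg_one_pow_eq_or ℝ k with h | h <;> rw [h]
  · exact sign_one
  · rw [sign_neg, sign_one]

/-- Simplicity and crossing direction of the zero eigenvalue at `B₀ = (-1)^k` for the real
characteristic equation `F(μ,B) = 0` of the controlled delay equation. -/
theorem stmt_1 (k : ℕ) (hk : 1 ≤ k)
    (ε : ℝ) (hε : ε = 1 / ((k + 1/2) * π))
    (F : ℝ → ℝ → ℝ)
    (hF : ∀ μ B, F μ B = ε * μ + (-1 : ℝ)^k * Real.exp (-μ)
          - (1 / (2*B)) * (1 + Real.exp (-(π * ε * μ))))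
    (B₀ : ℝ) (hB₀ : B₀ = (-1 : ℝ)^k) :
    deriv (fun μ => F μ B₀) 0 ≠ 0 ∧
    1 - (π/2 + B₀) * ε > 0 ∧
    (-(deriv (fun B => F 0 B) B₀) / deriv (fun μ => F μ B₀) 0) * (1 - (π/2 + B₀) * ε) = B₀ ∧
    Real.sign (-(deriv (fun B => F 0 B) B₀) / deriv (fun μ => F μ B₀) 0) = (-1 : ℝ)^k := by
  have hFeq : F = charFun ε B₀ := funext₂ fun μ B => by rw [hF, hB₀, charFun]
  have hsq : B₀ ^ 2 = 1 := by rw [hB₀, ← pow_mul, pow_mul', neg_one_sq, one_pow]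
  have hB₀ne : B₀ ≠ 0 := by rintro rfl; norm_num at hsq
  set D := 1 - (π / 2 + B₀) * ε
  have hD : 0 < D := by
    have hB₀le : B₀ ≤ 1 := by nlinarith
    exact sub_pos.mpr (hε ▸ pi_div_two_add_mul_one_div_lt_one hk hB₀le)
  have hderiv_μ : deriv (fun μ => F μ B₀) 0 = -B₀ * D := by
    rw [hFeq, (hasDerivAt_charFun_fst ε B₀ B₀).deriv]
    field_simp
    linear_combination (-(ε * π) - 2 * B₀ * ε) * hsq
  have hderiv_B : deriv (fun B => F 0 B) B₀ = 1 := by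
    rw [hFeq, (hasDerivAt_charFun_snd ε B₀ hB₀ne).deriv, hsq, inv_one]
  have hslope : -(deriv (fun B => F 0 B) B₀) / deriv (fun μ => F μ B₀) 0 = B₀ / D := by
    rw [hderiv_B, hderiv_μ]
    field_simp
    linear_combination -hsq
  refine ⟨?_, hD, ?_, ?_⟩
  · rw [hderiv_μ]
    exact mul_ne_zero (neg_ne_zero.mpr hB₀ne) hD.ne'
  · rw [hslope, div_mul_cancel₀ _ hD.ne']
  · rw [hslope, Real.sign_div_of_pos _ hD, hB₀, Real.sign_neg_one_pow]
end

section
/- Let k be an integer, m a nonnegative integer, B a nonzero real number, and let ω, Ω be real with −2 < Ω < 0. Set Ω̃ := Ω + (2m+1). Then the complex 2-scale characteristic equation Ω̃ + (−1)^k·i·e^{iω} − (1/B)·sin(πΩ/2)·e^{iπΩ/2} = 0 holds if and only if both Ω̃·sin(πΩ/2) − (−1)^k·cos(ω − πΩ/2) = 0 and B·cos(ω) = (−1)^k·sin²(πΩ/2) hold. -/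
open Real

/-- The complex 2-scale characteristic equation is equivalent to the pair of real equations
`Ω̃ sin(πΩ/2) - (-1)^k cos(ω - πΩ/2) = 0` and `B cos ω = (-1)^k sin²(πΩ/2)`. -/
theorem stmt_3 (k : ℤ) (m : ℕ) (B : ℝ) (hB : B ≠ 0) (ω Ω : ℝ)
    (hΩ : Ω ∈ Set.Ioo (-2 : ℝ) 0)
    (Ωt : ℝ) (hΩt : Ωt = Ω + (2*m+1)) :
    ((Ωt : ℂ) + (-1:ℂ)^k * Complex.I * Complex.exp (Complex.I * (ω : ℂ))
      - (1/(B:ℂ)) * ((Real.sin (π*Ω/2) : ℝ) : ℂ) * Complex.exp (Complex.I * ((π*Ω/2 : ℝ) : ℂ)) = 0)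
    ↔ (Ωt * Real.sin (π*Ω/2) - (-1:ℝ)^k * Real.cos (ω - π*Ω/2) = 0
       ∧ B * Real.cos ω = (-1:ℝ)^k * (Real.sin (π*Ω/2))^2) := by
  obtain ⟨hΩ1, hΩ2⟩ := hΩ
  have hπ := Real.pi_pos
  have hsne : Real.sin (π*Ω/2) ≠ 0 := by
    apply ne_of_lt
    apply Real.sin_neg_of_neg_of_neg_pi_lt <;> nlinarith
  have hσ2 : ((-1:ℝ)^k)*((-1:ℝ)^k) = 1 := by
    rw [← zpow_add₀ (by norm_num : (-1:ℝ) ≠ 0)]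
    exact Even.neg_one_zpow ⟨k, rfl⟩
  -- rewrite the complex LHS as a real linear combination of 1 and I
  have hL : (Ωt : ℂ) + (-1:ℂ)^k * Complex.I * Complex.exp (Complex.I * (ω : ℂ))
      - (1/(B:ℂ)) * ((Real.sin (π*Ω/2) : ℝ) : ℂ) * Complex.exp (Complex.I * ((π*Ω/2 : ℝ) : ℂ))
      = ((Ωt - (-1:ℝ)^k * Real.sin ω - (1/B) * Real.sin (π*Ω/2) * Real.cos (π*Ω/2) : ℝ) : ℂ)
        + ((((-1:ℝ)^k * Real.cos ω - (1/B) * Real.sin (π*Ω/2) * Real.sin (π*Ω/2)) : ℝ) : ℂ) * Complex.I := by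
    rw [mul_comm Complex.I (ω:ℂ), mul_comm Complex.I ((π*Ω/2:ℝ):ℂ),
      Complex.exp_mul_I, Complex.exp_mul_I]
    push_cast
    ring_nf
    rw [Complex.I_sq]
    ring
  rw [hL, Complex.ext_iff]
  simp only [Complex.add_re, Complex.mul_re, Complex.ofReal_re, Complex.ofReal_im,
    Complex.I_re, Complex.I_im, Complex.add_im, Complex.mul_im, Complex.zero_re, Complex.zero_im]
  rw [Real.cos_sub]
  constructor
  · rintro ⟨h1, h2⟩
    have h1' : Ωt - (-1:ℝ)^k * Real.sin ω - (1/B) * Real.sin (π*Ω/2) * Real.cos (π*Ω/2) = 0 := by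
      linarith
    have h2' : (-1:ℝ)^k * Real.cos ω - (1/B) * Real.sin (π*Ω/2) * Real.sin (π*Ω/2) = 0 := by
      linarith
    constructor
    · linear_combination Real.sin (π*Ω/2) * h1' - Real.cos (π*Ω/2) * h2'
    · linear_combination (-1:ℝ)^k * B * h2' - B * Real.cos ω * hσ2 + (-1:ℝ)^k * Real.sin (π*Ω/2)^2 * (mul_inv_cancel₀ hB)
  · rintro ⟨g1, g2⟩
    have h2' : (-1:ℝ)^k * Real.cos ω - (1/B) * Real.sin (π*Ω/2) * Real.sin (π*Ω/2) = 0 := by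
      field_simp
      linear_combination (-1:ℝ)^k * g2 + Real.sin (π*Ω/2) * Real.sin (π*Ω/2) * hσ2
    have key : Real.sin (π*Ω/2) *
        (Ωt - (-1:ℝ)^k * Real.sin ω - (1/B) * Real.sin (π*Ω/2) * Real.cos (π*Ω/2)) = 0 := by
      linear_combination g1 + Real.cos (π*Ω/2) * h2'
    have h1' : Ωt - (-1:ℝ)^k * Real.sin ω - (1/B) * Real.sin (π*Ω/2) * Real.cos (π*Ω/2) = 0 :=
      (mul_eq_zero.mp key).resolve_left hsne
    constructor <;> linarith
end

section
/- Let k be an integer, m a nonnegative integer, B a nonzero real number, and ω, Ω real with Ω̃ := Ω + (2m+1). If Ω̃ + (−1)^k·i·e^{iω} − (1/B)·sin(πΩ/2)·e^{iπΩ/2} = 0, then B satisfies the quadratic relation (Ω̃² − 1)·B² + Ω̃·sin(πΩ̃)·B + cos²(πΩ̃/2) = 0. Moreover its (quarter-)discriminant satisfies the identity (Ω̃·sin(πΩ̃)/2)² − (Ω̃² − 1)·cos²(πΩ̃/2) = cos²(πΩ̃/2)·(1 − (Ω̃·cos(πΩ̃/2))²). -/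
open Real

/-!
Moving the unimodular term `(-1)^k i e^{iω}` to one side and taking squared moduli eliminates `ω`:
`|(sin θ / B) e^{iθ} - Ω̃|² = 1` with `θ = πΩ/2`, which after multiplying by `B²` is a quadratic in
`B`. Since `Ω̃ - Ω` is an odd integer, `cos²(πΩ̃/2) = sin²θ` and `sin(πΩ̃) = -sin(2θ)`, which turns
this quadratic into the stated one; the discriminant identity is then `sin²θ + cos²θ = 1`.
-/

lemma sin_pi_mul_add_odd (x : ℝ) (n : ℤ) : sin (π * (x + (2 * n + 1))) = -sin (π * x) := by
  rw [← sin_antiperiodic.int_odd_mul_antiperiodic n (π * x)]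
  ring_nf

lemma cos_sq_pi_mul_add_odd_div_two (x : ℝ) (n : ℤ) :
    cos (π * (x + (2 * n + 1)) / 2) ^ 2 = sin (π * x / 2) ^ 2 := by
  have hcos : cos (2 * (π * (x + (2 * n + 1)) / 2)) = -cos (2 * (π * x / 2)) := by
    rw [← cos_antiperiodic.int_odd_mul_antiperiodic n (2 * (π * x / 2))]
    ring_nf
  rw [cos_sq, hcos, sin_sq, cos_sq]
  ring

lemma normSq_ofReal_mul_exp_sub (r θ a : ℝ) :
    Complex.normSq (r * Complex.exp (θ * Complex.I) - a) = r ^ 2 - 2 * a * r * cos θ + a ^ 2 := by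
  rw [Complex.exp_mul_I, ← Complex.ofReal_cos, ← Complex.ofReal_sin, Complex.normSq_apply]
  simp only [Complex.sub_re, Complex.sub_im, Complex.mul_re, Complex.mul_im, Complex.add_re,
    Complex.add_im, Complex.ofReal_re, Complex.ofReal_im, Complex.I_re, Complex.I_im]
  linear_combination r ^ 2 * sin_sq_add_cos_sq θ

lemma quadratic_of_normSq_div_mul_exp_sub_eq_one {s B θ a : ℝ} (hB : B ≠ 0)
    (h : Complex.normSq ((s / B : ℝ) * Complex.exp (θ * Complex.I) - a) = 1) :
    (a ^ 2 - 1) * B ^ 2 - 2 * a * s * cos θ * B + s ^ 2 = 0 := by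
  rw [normSq_ofReal_mul_exp_sub] at h
  field_simp at h
  linear_combination h

/-- Any solution of the 2-scale characteristic equation satisfies the quadratic relation
`(Ω̃²-1)B² + Ω̃ sin(πΩ̃) B + cos²(πΩ̃/2) = 0`, whose (quarter-)discriminant equals
`cos²(πΩ̃/2)(1 - (Ω̃ cos(πΩ̃/2))²)`. -/
theorem stmt_4 (k : ℤ) (m : ℕ) (B : ℝ) (hB : B ≠ 0) (ω Ω : ℝ)
    (Ωt : ℝ) (hΩt : Ωt = Ω + (2*m+1))
    (h : (Ωt : ℂ) + (-1:ℂ)^k * Complex.I * Complex.exp (Complex.I * (ω : ℂ))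
      - (1/(B:ℂ)) * ((Real.sin (π*Ω/2) : ℝ) : ℂ) * Complex.exp (Complex.I * ((π*Ω/2 : ℝ) : ℂ)) = 0) :
    (Ωt^2 - 1) * B^2 + Ωt * Real.sin (π*Ωt) * B + (Real.cos (π*Ωt/2))^2 = 0
    ∧ (Ωt * Real.sin (π*Ωt) / 2)^2 - (Ωt^2 - 1) * (Real.cos (π*Ωt/2))^2
      = (Real.cos (π*Ωt/2))^2 * (1 - (Ωt * Real.cos (π*Ωt/2))^2) := by
  set θ := π * Ω / 2 with hθ
  have hsin : sin (π * Ωt) = -(2 * sin θ * cos θ) := by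
    have hodd : sin (π * (Ω + (2 * m + 1))) = -sin (π * Ω) := by
      exact_mod_cast sin_pi_mul_add_odd Ω m
    rw [hΩt, hodd, show π * Ω = 2 * θ by rw [hθ]; ring, sin_two_mul]
  have hcos : cos (π * Ωt / 2) ^ 2 = sin θ ^ 2 := by
    rw [hΩt]
    exact_mod_cast cos_sq_pi_mul_add_odd_div_two Ω m
  have hunit : Complex.normSq ((-1:ℂ)^k * Complex.I * Complex.exp (Complex.I * ω)) = 1 := by
    simp [Complex.normSq_eq_norm_sq, Complex.norm_exp]
  have hquad : (Ωt ^ 2 - 1) * B ^ 2 - 2 * Ωt * sin θ * cos θ * B + sin θ ^ 2 = 0 := by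
    refine quadratic_of_normSq_div_mul_exp_sub_eq_one hB ?_
    rw [← hunit]
    congr 1
    rw [Complex.ofReal_div, mul_comm (θ : ℂ)]
    linear_combination (-1 : ℂ) * h
  refine ⟨?_, ?_⟩
  · rw [hsin, hcos]
    linear_combination hquad
  · rw [hsin, mul_pow, hcos]
    linear_combination (Ωt ^ 2 * sin θ ^ 2) * sin_sq_add_cos_sq θ
end

section
/- Define D(Ω̃) := cos²(πΩ̃/2)·(1 − (Ω̃·cos(πΩ̃/2))²) and, where D(Ω̃) ≥ 0 and Ω̃² ≠ 1, B^±(Ω̃) := (Ω̃² − 1)^{−1}·(−(1/2)·Ω̃·sin(πΩ̃) ± √(D(Ω̃))). Then: (i) for every Ω̃ with 0 < Ω̃ < 1 one has D(Ω̃) > 0 and B^+(Ω̃) < 0 < B^−(Ω̃); (ii) for every integer m ≥ 1 and every Ω̃ with 2m < Ω̃ < 2m+1 and D(Ω̃) ≥ 0, one has B^−(Ω̃) ≤ B^+(Ω̃) < 0. -/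
open Real

set_option maxHeartbeats 1000000 in
/-- Sign properties of the two roots `B^±` of the quadratic relation for the scaled control
parameter: for `0 < Ω̃ < 1` one has `D > 0` and `B⁺ < 0 < B⁻`; for `m ≥ 1` and
`2m < Ω̃ < 2m+1` with `D ≥ 0` one has `B⁻ ≤ B⁺ < 0`. -/
theorem stmt_6
    (D : ℝ → ℝ)
    (hD : ∀ Ωt, D Ωt = (Real.cos (π*Ωt/2))^2 * (1 - (Ωt * Real.cos (π*Ωt/2))^2))
    (Bp Bm : ℝ → ℝ)
    (hBp : ∀ Ωt, Bp Ωt = (Ωt^2 - 1)⁻¹ * (-(1/2) * Ωt * Real.sin (π*Ωt) + Real.sqrt (D Ωt)))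
    (hBm : ∀ Ωt, Bm Ωt = (Ωt^2 - 1)⁻¹ * (-(1/2) * Ωt * Real.sin (π*Ωt) - Real.sqrt (D Ωt))) :
    (∀ Ωt : ℝ, 0 < Ωt → Ωt < 1 → 0 < D Ωt ∧ Bp Ωt < 0 ∧ 0 < Bm Ωt)
    ∧ (∀ m : ℕ, 1 ≤ m → ∀ Ωt : ℝ, 2*(m:ℝ) < Ωt → Ωt < 2*(m:ℝ)+1 → 0 ≤ D Ωt →
        Bm Ωt ≤ Bp Ωt ∧ Bp Ωt < 0) := by
  have hpi := Real.pi_pos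
  constructor
  · intro Ωt h0 h1
    set c := Real.cos (π*Ωt/2) with hc
    set s := Real.sin (π*Ωt/2) with hs
    have hpyth : s^2 + c^2 = 1 := Real.sin_sq_add_cos_sq _
    have hcpos : 0 < c := by
      apply Real.cos_pos_of_mem_Ioo
      constructor <;> [nlinarith; nlinarith]
    have hspos : 0 < s := by
      apply Real.sin_pos_of_pos_of_lt_pi <;> nlinarith
    have hc1 : c ≤ 1 := Real.cos_le_one _
    have hsin : Real.sin (π*Ωt) = 2 * s * c := by
      rw [show π*Ωt = 2*(π*Ωt/2) by ring, Real.sin_two_mul]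
    have hs2 : s^2 = 1 - c^2 := by linarith
    have key : c^2*(1-(Ωt*c)^2) - (Ωt*s*c)^2 = c^2*(1-Ωt^2) := by
      linear_combination (-(Ωt^2*c^2)) * hpyth
    have h01 : 0 < Ωt * c := mul_pos h0 hcpos
    have h1' : Ωt * c < 1 := by nlinarith
    have hDpos : 0 < D Ωt := by
      rw [hD, ← hc]
      apply mul_pos (by positivity)
      nlinarith
    refine ⟨hDpos, ?_, ?_⟩
    · rw [hBp, hsin]
      have hσ : 0 ≤ Ωt * s * c := by positivity
      have hlt : Ωt * s * c < Real.sqrt (D Ωt) := by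
        rw [show Ωt * s * c = Real.sqrt ((Ωt*s*c)^2) by
          rw [Real.sqrt_sq hσ]]
        apply Real.sqrt_lt_sqrt (by positivity)
        rw [hD, ← hc]
        nlinarith [key, mul_pos (show (0:ℝ) < c^2 by positivity) (show (0:ℝ) < 1 - Ωt^2 by nlinarith)]
      have hinv : (Ωt^2 - 1)⁻¹ < 0 := by
        rw [inv_lt_zero]; nlinarith
      nlinarith
    · rw [hBm, hsin]
      have hsqpos : 0 < Real.sqrt (D Ωt) := Real.sqrt_pos.mpr hDpos
      have hinv : (Ωt^2 - 1)⁻¹ < 0 := by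
        rw [inv_lt_zero]; nlinarith
      nlinarith [mul_pos hspos hcpos, mul_pos h0 (mul_pos hspos hcpos)]
  · intro m hm Ωt hlo hhi hDnn
    have hm1 : (1:ℝ) ≤ (m:ℝ) := by exact_mod_cast hm
    have hΩ2 : 2 < Ωt := by linarith
    set c := Real.cos (π*Ωt/2) with hc
    set s := Real.sin (π*Ωt/2) with hs
    have hpyth : s^2 + c^2 = 1 := Real.sin_sq_add_cos_sq _
    have hsin : Real.sin (π*Ωt) = 2 * s * c := by
      rw [show π*Ωt = 2*(π*Ωt/2) by ring, Real.sin_two_mul]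
    have hsinpos : 0 < Real.sin (π*Ωt) := by
      have : Real.sin (π*Ωt) = Real.sin (π*(Ωt - 2*m) + (m:ℤ) * (2*π)) := by
        congr 1; push_cast; ring
      rw [this, Real.sin_add_int_mul_two_pi]
      apply Real.sin_pos_of_pos_of_lt_pi <;> nlinarith
    have hcne : c ≠ 0 := by
      intro h
      rw [hsin, h] at hsinpos; simp at hsinpos
    have hc2 : 0 < c^2 := by positivity
    have hσ : 0 < (1/2) * Ωt * Real.sin (π*Ωt) := by positivity
    have hlt : Real.sqrt (D Ωt) < (1/2) * Ωt * Real.sin (π*Ωt) := by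
      rw [Real.sqrt_lt' hσ, hD, hsin, ← hc]
      have key : c^2*(1-(Ωt*c)^2) - (Ωt*s*c)^2 = c^2*(1-Ωt^2) := by
        linear_combination (-(Ωt^2*c^2)) * hpyth
      nlinarith [key, mul_pos hc2 (show (0:ℝ) < Ωt^2 - 1 by nlinarith)]
    have hinv : 0 < (Ωt^2 - 1)⁻¹ := by
      apply inv_pos.mpr; nlinarith
    have hsq : 0 ≤ Real.sqrt (D Ωt) := Real.sqrt_nonneg _
    constructor
    · rw [hBp, hBm]
      apply mul_le_mul_of_nonneg_left (by linarith) hinv.le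
    · rw [hBp]
      exact mul_neg_of_pos_of_neg hinv (by linarith)
end

section
/- For Ω ∈ (−1, 0) define ω^±(Ω) := πΩ/2 ± arccos(−(Ω+1)·sin(πΩ/2)). Then both functions ω^+ and ω^− are strictly increasing and differentiable on (−1, 0) with strictly positive bounded derivative, ω^+ maps (−1, 0) onto (0, π/2) with boundary limits ω^+(−1⁺) = 0 and ω^+(0⁻) = π/2, and ω^− maps (−1, 0) onto (−π, −π/2) with boundary limits ω^−(−1⁺) = −π and ω^−(0⁻) = −π/2. -/
open Real

/-!
Writing `ω^± = πΩ/2 ± arccos g` with `g(Ω) = -(Ω+1) sin(πΩ/2)`, the whole statement reduces to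
the bound `|(arccos ∘ g)'| < π/2` on `(-1, 0)`: it makes both derivatives `π/2 ± (arccos ∘ g)'`
lie in `(0, π)`. Squared, the bound reads `g'² < (π/2)² (1 - g²)`, which follows from
`|sin θ| < |θ|` at `θ = πΩ/2` together with `sin θ cos θ < 0`. Since `g(-1) = g(0) = 0`, the
branches are continuous strictly increasing maps of `[-1, 0]` with endpoint values
`πΩ/2 ± π/2`, which gives the ranges and the one-sided limits.
-/

noncomputable def arccosArg (Ω : ℝ) : ℝ := -(Ω + 1) * sin (π * Ω / 2)

/-- `ω^+ = freqBranch 1` and `ω^- = freqBranch (-1)`. -/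
noncomputable def freqBranch (ε Ω : ℝ) : ℝ := π * Ω / 2 + ε * arccos (arccosArg Ω)

lemma hasDerivAt_pi_mul_div_two (Ω : ℝ) : HasDerivAt (fun x : ℝ => π * x / 2) (π / 2) Ω := by
  simpa using ((hasDerivAt_id Ω).const_mul π).div_const 2

lemma hasDerivAt_arccosArg (Ω : ℝ) :
    HasDerivAt arccosArg (-sin (π * Ω / 2) - (Ω + 1) * (π / 2) * cos (π * Ω / 2)) Ω := by
  have h : HasDerivAt arccosArg
      (-1 * sin (π * Ω / 2) + -(Ω + 1) * (cos (π * Ω / 2) * (π / 2))) Ω :=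
    ((hasDerivAt_id Ω).add_const 1).neg.mul ((hasDerivAt_sin _).comp Ω (hasDerivAt_pi_mul_div_two Ω))
  convert h using 1
  ring

lemma sq_deriv_arccosArg_lt {Ω : ℝ} (h₁ : -1 < Ω) (h₂ : Ω < 0) :
    (-sin (π * Ω / 2) - (Ω + 1) * (π / 2) * cos (π * Ω / 2)) ^ 2
      < (π / 2) ^ 2 * (1 - arccosArg Ω ^ 2) := by
  have hπ := pi_pos
  set θ := π * Ω / 2 with hθ
  have hθ_lo : -(π / 2) < θ := by nlinarith
  have hθ_hi : θ < 0 := by nlinarith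
  have hsin_neg : sin θ < 0 := sin_neg_of_neg_of_neg_pi_lt hθ_hi (by linarith)
  have hsin_gt : θ < sin θ := by
    have := sin_lt (x := -θ) (by linarith)
    rw [sin_neg] at this
    linarith
  have hcos_pos : 0 < cos θ := cos_pos_of_mem_Ioo ⟨hθ_lo, by linarith⟩
  have hsin_cos : 0 < (Ω + 1) * π * cos θ * (-sin θ) :=
    mul_pos (mul_pos (mul_pos (by linarith) hπ) hcos_pos) (by linarith)
  have hθ_sq : 0 < -θ * (2 * θ + π) := mul_pos (by linarith) (by linarith)
  unfold arccosArg
  nlinarith [sin_sq_add_cos_sq θ, mul_lt_mul'' (neg_lt_neg hsin_gt) (neg_lt_neg hsin_gt)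
    (by linarith) (by linarith), sq_nonneg ((Ω + 1) * (π / 2))]

lemma exists_hasDerivAt_arccos_arccosArg {Ω : ℝ} (h₁ : -1 < Ω) (h₂ : Ω < 0) :
    ∃ t, |t| < π / 2 ∧ HasDerivAt (fun x => arccos (arccosArg x)) t Ω := by
  set g' := -sin (π * Ω / 2) - (Ω + 1) * (π / 2) * cos (π * Ω / 2)
  have hlt := sq_deriv_arccosArg_lt h₁ h₂
  have hpos : 0 < 1 - arccosArg Ω ^ 2 := by nlinarith [sq_nonneg g', pi_pos]
  have hne_neg_one : arccosArg Ω ≠ -1 := by rintro h; rw [h] at hpos; norm_num at hpos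
  have hne_one : arccosArg Ω ≠ 1 := by rintro h; rw [h] at hpos; norm_num at hpos
  refine ⟨-(1 / √(1 - arccosArg Ω ^ 2)) * g', abs_lt_of_sq_lt_sq ?_ (by positivity),
    (hasDerivAt_arccos hne_neg_one hne_one).comp Ω (hasDerivAt_arccosArg Ω)⟩
  rw [mul_pow, neg_sq, div_pow, sq_sqrt hpos.le, one_pow, one_div_mul_eq_div,
    div_lt_iff₀ hpos]
  exact hlt

lemma continuous_freqBranch (ε : ℝ) : Continuous (freqBranch ε) := by
  unfold freqBranch arccosArg
  exact (by fun_prop : Continuous fun Ω : ℝ => π * Ω / 2).add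
    (continuous_const.mul (continuous_arccos.comp (by fun_prop)))

lemma freqBranch_neg_one (ε : ℝ) : freqBranch ε (-1) = -(π / 2) + ε * (π / 2) := by
  simp [freqBranch, arccosArg, neg_div]

lemma freqBranch_zero (ε : ℝ) : freqBranch ε 0 = ε * (π / 2) := by
  simp [freqBranch, arccosArg]

lemma exists_hasDerivAt_freqBranch {ε Ω : ℝ} (hε : |ε| ≤ 1) (hΩ : Ω ∈ Set.Ioo (-1 : ℝ) 0) :
    ∃ d, 0 < d ∧ d < π ∧ HasDerivAt (freqBranch ε) d Ω := by
  obtain ⟨t, ht, hderiv⟩ := exists_hasDerivAt_arccos_arccosArg hΩ.1 hΩ.2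
  have hεt : |ε * t| < π / 2 := by
    rw [abs_mul]
    exact lt_of_le_of_lt (mul_le_of_le_one_left (abs_nonneg t) hε) ht
  rw [abs_lt] at hεt
  exact ⟨π / 2 + ε * t, by linarith, by linarith, (hasDerivAt_pi_mul_div_two Ω).add (hderiv.const_mul ε)⟩

lemma strictMonoOn_freqBranch {ε : ℝ} (hε : |ε| ≤ 1) : StrictMonoOn (freqBranch ε) (Set.Icc (-1) 0) := by
  refine strictMonoOn_of_deriv_pos (convex_Icc _ _) (continuous_freqBranch ε).continuousOn ?_
  rw [interior_Icc]
  intro Ω hΩ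
  obtain ⟨d, hd, -, hderiv⟩ := exists_hasDerivAt_freqBranch hε hΩ
  rwa [hderiv.deriv]

lemma image_freqBranch {ε : ℝ} (hε : |ε| ≤ 1) :
    freqBranch ε '' Set.Ioo (-1) 0 = Set.Ioo (-(π / 2) + ε * (π / 2)) (ε * (π / 2)) := by
  rw [← freqBranch_neg_one, ← freqBranch_zero]
  exact (continuous_freqBranch ε).continuousOn.image_Ioo_of_strictMonoOn (by norm_num)
    (strictMonoOn_freqBranch hε)

/-- Monotonicity, differentiability with positive bounded derivative, ranges and boundary
limits of the two solution branches `ω^±(Ω) = πΩ/2 ± arccos(-(Ω+1) sin(πΩ/2))` on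
`Ω ∈ (-1,0)` (case `m = 0`, odd `k`). -/
theorem stmt_8
    (ωp ωm : ℝ → ℝ)
    (hωp : ∀ Ω, ωp Ω = π*Ω/2 + Real.arccos (-(Ω+1) * Real.sin (π*Ω/2)))
    (hωm : ∀ Ω, ωm Ω = π*Ω/2 - Real.arccos (-(Ω+1) * Real.sin (π*Ω/2))) :
    StrictMonoOn ωp (Set.Ioo (-1 : ℝ) 0) ∧
    StrictMonoOn ωm (Set.Ioo (-1 : ℝ) 0) ∧
    (∀ Ω ∈ Set.Ioo (-1 : ℝ) 0, DifferentiableAt ℝ ωp Ω ∧ 0 < deriv ωp Ω) ∧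
    (∀ Ω ∈ Set.Ioo (-1 : ℝ) 0, DifferentiableAt ℝ ωm Ω ∧ 0 < deriv ωm Ω) ∧
    (∃ C : ℝ, ∀ Ω ∈ Set.Ioo (-1 : ℝ) 0, deriv ωp Ω ≤ C ∧ deriv ωm Ω ≤ C) ∧
    ωp '' (Set.Ioo (-1 : ℝ) 0) = Set.Ioo 0 (π/2) ∧
    ωm '' (Set.Ioo (-1 : ℝ) 0) = Set.Ioo (-π) (-π/2) ∧
    Filter.Tendsto ωp (nhdsWithin (-1) (Set.Ioi (-1))) (nhds 0) ∧
    Filter.Tendsto ωp (nhdsWithin 0 (Set.Iio 0)) (nhds (π/2)) ∧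
    Filter.Tendsto ωm (nhdsWithin (-1) (Set.Ioi (-1))) (nhds (-π)) ∧
    Filter.Tendsto ωm (nhdsWithin 0 (Set.Iio 0)) (nhds (-π/2)) := by
  obtain rfl : ωp = freqBranch 1 := funext fun Ω => by simp [hωp, freqBranch, arccosArg]
  obtain rfl : ωm = freqBranch (-1) := funext fun Ω => by
    simp [hωm, freqBranch, arccosArg, sub_eq_add_neg]
  have hp : |(1 : ℝ)| ≤ 1 := by norm_num
  have hm : |(-1 : ℝ)| ≤ 1 := by norm_num
  have hderiv {ε Ω : ℝ} (hε : |ε| ≤ 1) (hΩ : Ω ∈ Set.Ioo (-1 : ℝ) 0) :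
      DifferentiableAt ℝ (freqBranch ε) Ω ∧ 0 < deriv (freqBranch ε) Ω ∧
        deriv (freqBranch ε) Ω ≤ π := by
    obtain ⟨d, hd₀, hdπ, hderiv⟩ := exists_hasDerivAt_freqBranch hε hΩ
    exact ⟨hderiv.differentiableAt, hderiv.deriv ▸ hd₀, hderiv.deriv ▸ hdπ.le⟩
  have tendsto (ε x : ℝ) (s : Set ℝ) :
      Filter.Tendsto (freqBranch ε) (nhdsWithin x s) (nhds (freqBranch ε x)) :=
    (continuous_freqBranch ε).continuousWithinAt
  refine ⟨(strictMonoOn_freqBranch hp).mono Set.Ioo_subset_Icc_self,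
    (strictMonoOn_freqBranch hm).mono Set.Ioo_subset_Icc_self,
    fun Ω hΩ => ⟨(hderiv hp hΩ).1, (hderiv hp hΩ).2.1⟩,
    fun Ω hΩ => ⟨(hderiv hm hΩ).1, (hderiv hm hΩ).2.1⟩,
    ⟨π, fun Ω hΩ => ⟨(hderiv hp hΩ).2.2, (hderiv hm hΩ).2.2⟩⟩, ?_, ?_, ?_, ?_, ?_, ?_⟩
  · rw [image_freqBranch hp]; congr 1 <;> ring
  · rw [image_freqBranch hm]; congr 1 <;> ring
  · convert tendsto 1 (-1) _ using 2; rw [freqBranch_neg_one]; ring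
  · convert tendsto 1 0 _ using 2; rw [freqBranch_zero]; ring
  · convert tendsto (-1) (-1) _ using 2; rw [freqBranch_neg_one]; ring
  · convert tendsto (-1) 0 _ using 2; rw [freqBranch_zero]; ring
end

section
/- Let m be a nonnegative integer and let Ω ∈ (−2, 0), ω ∈ ℝ with Ω̃ := Ω + (2m+1) > 0. Suppose Ω̃·sin(πΩ/2) + cos(ω − πΩ/2) = 0 and sin(ω − πΩ/2) = 0. Then cos(ω − πΩ/2) = 1 and Ω̃·(−1)^m·cos(πΩ̃/2) = 1. In particular, for m = 0 (where 0 < Ω̃ < 1 when −1 < Ω < 0) no such pair (Ω, ω) exists. -/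
open Real

lemma key (m : ℕ) (Ω ω : ℝ) (hΩ : Ω ∈ Set.Ioo (-2 : ℝ) 0)
    (hpos : 0 < Ω + (2*(m:ℝ)+1))
    (hH : (Ω + (2*(m:ℝ)+1)) * Real.sin (π*Ω/2) + Real.cos (ω - π*Ω/2) = 0)
    (hs : Real.sin (ω - π*Ω/2) = 0) :
    Real.cos (ω - π*Ω/2) = 1 ∧
    (Ω + (2*(m:ℝ)+1)) * (-1:ℝ)^m * Real.cos (π*(Ω + (2*(m:ℝ)+1))/2) = 1 := by
  obtain ⟨h1, h2⟩ := hΩ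
  have hπ := Real.pi_pos
  -- sin(πΩ/2) < 0
  have hsneg : Real.sin (π*Ω/2) < 0 := by
    have h : 0 < -(π*Ω/2) := by nlinarith
    have h' : -(π*Ω/2) < π := by nlinarith
    have := Real.sin_pos_of_pos_of_lt_pi h h'
    rw [Real.sin_neg] at this
    linarith
  have hcpos : 0 < Real.cos (ω - π*Ω/2) := by nlinarith
  have hc1 : Real.cos (ω - π*Ω/2) = 1 := by
    rcases Real.sin_eq_zero_iff_cos_eq.mp hs with h | h
    · exact h
    · linarith
  refine ⟨hc1, ?_⟩
  -- Ω̃ sin(πΩ/2) = -1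
  have hkey : (Ω + (2*(m:ℝ)+1)) * Real.sin (π*Ω/2) = -1 := by linarith
  have harg : π*(Ω + (2*(m:ℝ)+1))/2 = (π*Ω/2 + π/2) + m * π := by ring
  rw [harg, Real.cos_add_nat_mul_pi, Real.cos_add_pi_div_two]
  have hsq : ((-1:ℝ)^m) * ((-1:ℝ)^m) = 1 := by
    rw [← pow_add]
    exact (neg_one_pow_eq_one_iff_even (by norm_num)).mpr ⟨m, by ring⟩
  nlinarith [hkey, hsq]

/-- Critical points of the implicit function `Ω = Ω(ω)` on the 2-scale frequency curve:
`sin(ω - πΩ/2) = 0` forces `cos(ω - πΩ/2) = 1` and the discriminant condition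
`Ω̃ (-1)^m cos(πΩ̃/2) = 1`; in particular no such point exists for `m = 0`. -/
theorem stmt_9 :
    (∀ (m : ℕ) (Ω ω : ℝ), Ω ∈ Set.Ioo (-2 : ℝ) 0 →
      0 < Ω + (2*(m:ℝ)+1) →
      (Ω + (2*(m:ℝ)+1)) * Real.sin (π*Ω/2) + Real.cos (ω - π*Ω/2) = 0 →
      Real.sin (ω - π*Ω/2) = 0 →
      Real.cos (ω - π*Ω/2) = 1 ∧
      (Ω + (2*(m:ℝ)+1)) * (-1:ℝ)^m * Real.cos (π*(Ω + (2*(m:ℝ)+1))/2) = 1)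
    ∧ ¬ ∃ (Ω ω : ℝ), Ω ∈ Set.Ioo (-1 : ℝ) 0 ∧
        (Ω + 1) * Real.sin (π*Ω/2) + Real.cos (ω - π*Ω/2) = 0 ∧
        Real.sin (ω - π*Ω/2) = 0 := by
  refine ⟨key, ?_⟩
  rintro ⟨Ω, ω, ⟨h1, h2⟩, hH, hs⟩
  have hΩ : Ω ∈ Set.Ioo (-2 : ℝ) 0 := ⟨by linarith, h2⟩
  have hpos : 0 < Ω + (2*((0:ℕ):ℝ)+1) := by norm_num; linarith
  have hH' : (Ω + (2*((0:ℕ):ℝ)+1)) * Real.sin (π*Ω/2) + Real.cos (ω - π*Ω/2) = 0 := by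
    norm_num; linarith [hH]
  obtain ⟨hc1, _⟩ := key 0 Ω ω hΩ hpos hH' hs
  -- (Ω+1) sin(πΩ/2) = -1 but |Ω+1| < 1 and |sin| ≤ 1
  have hb := Real.neg_one_le_sin (π*Ω/2)
  have hkey : (Ω + 1) * Real.sin (π*Ω/2) = -1 := by linarith
  nlinarith [hb, hkey]
end

section
/- Let Ω ∈ (−1, 0) and ω ∈ (0, π/2), and suppose Ω̃·sin(πΩ/2) + cos(ω − πΩ/2) = 0 for some real Ω̃ > 0. Then d(Ω, ω) := sin²(πΩ/2)·sin(ω) + (π/2)·cos(ω)·sin(ω − πΩ) > 0. -/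
open Real

/-- Strict positivity of `d(Ω,ω) = sin²(πΩ/2) sin ω + (π/2) cos ω sin(ω - πΩ)` on the
branch `0 < ω < π/2`, `Ω ∈ (-1,0)`, along the 2-scale frequency relation. -/
theorem stmt_10 (Ω ω : ℝ) (hΩ : Ω ∈ Set.Ioo (-1:ℝ) 0) (hω : ω ∈ Set.Ioo 0 (π/2))
    (h : ∃ Ωt : ℝ, 0 < Ωt ∧ Ωt * Real.sin (π*Ω/2) + Real.cos (ω - π*Ω/2) = 0) :
    0 < (Real.sin (π*Ω/2))^2 * Real.sin ω + (π/2) * Real.cos ω * Real.sin (ω - π*Ω) := by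
  obtain ⟨hΩ1, hΩ2⟩ := hΩ
  obtain ⟨hω1, hω2⟩ := hω
  obtain ⟨Ωt, hΩt, hrel⟩ := h
  have hπ := Real.pi_pos
  have hθ1 : -(π/2) < π*Ω/2 := by nlinarith
  have hθ2 : π*Ω/2 < 0 := by nlinarith
  have hsθ : Real.sin (π*Ω/2) < 0 :=
    Real.sin_neg_of_neg_of_neg_pi_lt hθ2 (by linarith)
  have hcos : 0 < Real.cos (ω - π*Ω/2) := by nlinarith
  have hlt : ω - π*Ω/2 < π/2 := by
    by_contra hge
    push_neg at hge
    have := Real.cos_nonpos_of_pi_div_two_le_of_le hge (by nlinarith)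
    linarith
  have hsin2 : 0 < Real.sin (ω - π*Ω) :=
    Real.sin_pos_of_pos_of_lt_pi (by nlinarith) (by nlinarith)
  have hsq : 0 < (Real.sin (π*Ω/2))^2 := by nlinarith
  have hsω : 0 < Real.sin ω := Real.sin_pos_of_pos_of_lt_pi hω1 (by linarith)
  have hcω : 0 < Real.cos ω := Real.cos_pos_of_mem_Ioo ⟨by linarith, hω2⟩
  have : 0 < π/2 := by linarith
  exact add_pos (mul_pos hsq hsω) (mul_pos (mul_pos this hcω) hsin2)
end

section
/- Let Ω ∈ (−1, 0) and let ω be real with −π/2 < ω ≤ π·Ω. Then d(Ω, ω) := sin²(πΩ/2)·sin(ω) + (π/2)·cos(ω)·sin(ω − πΩ) < 0. -/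
open Real

/-- Strict negativity of `d(Ω,ω) = sin²(πΩ/2) sin ω + (π/2) cos ω sin(ω - πΩ)` in the
region `-π/2 < ω ≤ πΩ`, `Ω ∈ (-1,0)`. -/
theorem stmt_11 (Ω ω : ℝ) (hΩ : Ω ∈ Set.Ioo (-1:ℝ) 0)
    (hω1 : -(π/2) < ω) (hω2 : ω ≤ π*Ω) :
    (Real.sin (π*Ω/2))^2 * Real.sin ω + (π/2) * Real.cos ω * Real.sin (ω - π*Ω) < 0 := by
  obtain ⟨hΩ1, hΩ2⟩ := hΩ
  have hπ : (0:ℝ) < π := Real.pi_pos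
  have hπΩ : π * Ω < 0 := mul_neg_of_pos_of_neg hπ hΩ2
  have hω0 : ω < 0 := lt_of_le_of_lt hω2 hπΩ
  -- sin ω < 0
  have hsinω : Real.sin ω < 0 :=
    Real.sin_neg_of_neg_of_neg_pi_lt hω0 (by linarith)
  -- sin(πΩ/2) ≠ 0, so square > 0
  have hs2 : (0:ℝ) < (Real.sin (π*Ω/2))^2 := by
    have h1 : Real.sin (π*Ω/2) < 0 :=
      Real.sin_neg_of_neg_of_neg_pi_lt (by linarith) (by nlinarith)
    nlinarith [h1]
  -- cos ω > 0
  have hcos : 0 < Real.cos ω :=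
    Real.cos_pos_of_mem_Ioo ⟨by linarith, by linarith⟩
  -- sin(ω - πΩ) ≤ 0
  have hsd : Real.sin (ω - π*Ω) ≤ 0 :=
    Real.sin_nonpos_of_nonpos_of_neg_pi_le (by linarith) (by linarith)
  nlinarith [mul_pos hs2 (neg_pos.mpr hsinω), mul_nonneg (mul_pos (by linarith : (0:ℝ) < π/2) hcos).le (neg_nonneg.mpr hsd)]
end

section
/- Let Ω ∈ (−1, 0) and ω ∈ ℝ, and let Ω̃ > 2 be real. If Ω̃·sin(πΩ/2) + cos(ω − πΩ/2) = 0, then sin²(πΩ/2) ≠ cos(ω). Consequently, for odd k and m ≥ 1 the control parameter B = −sin²(πΩ/2)/cos(ω) determined by the 2-scale characteristic equation never equals −1. -/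
open Real

/-- Along the 2-scale frequency relation with `Ω̃ > 2`, one never has
`sin²(πΩ/2) = cos ω`; hence the control parameter `B = -sin²(πΩ/2)/cos ω`
never equals `-1`. -/
theorem stmt_12 (Ω ω Ωt : ℝ) (hΩ : Ω ∈ Set.Ioo (-1:ℝ) 0) (hΩt : 2 < Ωt)
    (h : Ωt * Real.sin (π*Ω/2) + Real.cos (ω - π*Ω/2) = 0) :
    (Real.sin (π*Ω/2))^2 ≠ Real.cos ω ∧
    -(Real.sin (π*Ω/2))^2 / Real.cos ω ≠ -1 := by
  obtain ⟨hΩ1, hΩ2⟩ := hΩ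
  set θ := π*Ω/2 with hθ
  have hθ1 : -(π/2) < θ := by
    rw [hθ]; nlinarith [Real.pi_pos]
  have hθ2 : θ < 0 := by
    rw [hθ]; nlinarith [Real.pi_pos]
  have hs : Real.sin θ < 0 := Real.sin_neg_of_neg_of_neg_pi_lt hθ2 (by linarith [Real.pi_pos])
  have hsge : -1 ≤ Real.sin θ := Real.neg_one_le_sin θ
  have hcle : Real.cos θ ≤ 1 := Real.cos_le_one θ
  have hcge : 0 < Real.cos θ := Real.cos_pos_of_mem_Ioo ⟨hθ1, by linarith [Real.pi_pos]⟩
  have key : (Real.sin θ)^2 ≠ Real.cos ω := by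
    intro heq
    have hexp : Real.cos (ω - θ) = Real.cos ω * Real.cos θ + Real.sin ω * Real.sin θ :=
      Real.cos_sub ω θ
    rw [hexp, ← heq] at h
    -- h : Ωt * sin θ + (sin θ^2 * cos θ + sin ω * sin θ) = 0
    have hdiv : Ωt + Real.sin θ * Real.cos θ + Real.sin ω = 0 := by
      have h' : Real.sin θ * (Ωt + Real.sin θ * Real.cos θ + Real.sin ω) = 0 := by linear_combination h
      rcases mul_eq_zero.mp h' with h1 | h2
      · exact absurd h1 (ne_of_lt hs)
      · exact h2
    have hsinge : -1 ≤ Real.sin ω := Real.neg_one_le_sin ω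
    nlinarith [mul_le_one₀ (by linarith : -Real.sin θ ≤ 1) (le_of_lt hcge) hcle]
  refine ⟨key, ?_⟩
  intro hcontra
  by_cases hc : Real.cos ω = 0
  · rw [hc, div_zero] at hcontra; norm_num at hcontra
  · rw [div_eq_iff hc] at hcontra
    apply key
    linarith [hcontra]
end

section
/- Let k, k̃ be nonnegative integers, ε > 0, B < 0, and let μ = μ_R + i·ω̃ with μ_R ≥ 0 and ω̃ = (k̃ + 1/2)·π. If ψ(μ, ε, B) := −ε·B·μ − (−1)^k·B·exp(−μ) + (1/2)·(1 + exp(−π·ε·μ)) = 0, then μ_R = 0, ε·ω̃ = 1, and k̃ ≡ k (mod 2). -/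
open Real

/-- Trapping lemma: for `B < 0`, eigenvalues `μ = μ_R + i ω̃` with `μ_R ≥ 0` and
`ω̃ = (k̃+1/2)π` of the controlled characteristic equation `ψ(μ,ε,B) = 0` must satisfy
`μ_R = 0`, `ε ω̃ = 1` and `k̃ ≡ k (mod 2)`. -/
theorem stmt_13 (k kt : ℕ) (ε B : ℝ) (hε : 0 < ε) (hB : B < 0)
    (μR ωt : ℝ) (hμR : 0 ≤ μR) (hωt : ωt = ((kt : ℝ) + 1/2) * π)
    (μ : ℂ) (hμ : μ = (μR : ℂ) + (ωt : ℂ) * Complex.I)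
    (h : -(ε:ℂ) * (B:ℂ) * μ - (-1:ℂ)^k * (B:ℂ) * Complex.exp (-μ)
         + (1/2) * (1 + Complex.exp (-((π*ε : ℝ):ℂ) * μ)) = 0) :
    μR = 0 ∧ ε * ωt = 1 ∧ kt % 2 = k % 2 := by
  have hπ := Real.pi_pos
  have hw0 : 0 < ωt := by rw [hωt]; positivity
  have hcosw : Real.cos ωt = 0 := by
    have h0 : ωt = (kt:ℝ) * π + π/2 := by rw [hωt]; ring
    rw [h0, Real.cos_add, Real.sin_nat_mul_pi, Real.cos_pi_div_two]; ring
  have hsinw : Real.sin ωt = (-1:ℝ)^kt := by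
    have h0 : ωt = (kt:ℝ) * π + π/2 := by rw [hωt]; ring
    have hc : Real.cos ((kt:ℝ) * π) = (-1:ℝ)^kt := by
      have := Real.cos_nat_mul_pi_sub 0 kt
      simpa using this
    rw [h0, Real.sin_add, Real.sin_nat_mul_pi, Real.sin_pi_div_two, Real.cos_pi_div_two, hc]; ring
  obtain ⟨sk, hskdef, hskC⟩ : ∃ s : ℝ, s = (-1:ℝ)^k ∧ ((-1:ℂ))^k = (s:ℂ) := by
    exact ⟨(-1:ℝ)^k, rfl, by push_cast; ring⟩
  rw [hμ, hskC] at h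
  have hre := congrArg Complex.re h
  have him := congrArg Complex.im h
  simp only [Complex.add_re, Complex.add_im, Complex.sub_re, Complex.sub_im, Complex.mul_re,
    Complex.mul_im, Complex.neg_re, Complex.neg_im, Complex.one_re, Complex.one_im,
    Complex.exp_re, Complex.exp_im, Complex.ofReal_re, Complex.ofReal_im,
    Complex.I_re, Complex.I_im, Complex.zero_re, Complex.zero_im,
    Complex.div_re, Complex.div_im, Complex.re_ofNat, Complex.im_ofNat,
    Complex.inv_re, Complex.inv_im, Complex.normSq_ofNat, Real.cos_neg, Real.sin_neg, hcosw, hsinw] at hre him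
  ring_nf at hre him
  simp only [hcosw, Real.cos_neg, Real.sin_neg] at hre him
  -- Step 1: μR = 0
  have hx : μR = 0 := by
    by_contra hx
    have hx' : 0 < μR := lt_of_le_of_ne hμR (Ne.symm hx)
    have hF : rexp (-(ε * μR * π)) < 1 := by
      apply Real.exp_lt_one_iff.mpr
      have : 0 < ε * μR * π := by positivity
      linarith
    have hFpos : (0:ℝ) < rexp (-(ε * μR * π)) := Real.exp_pos _
    have hc : -1 ≤ Real.cos (ε * ωt * π) := Real.neg_one_le_cos _
    nlinarith [mul_pos (mul_pos hε hx') (neg_pos.mpr hB),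
      mul_le_mul_of_nonneg_left hc hFpos.le]
  subst hx
  simp only [neg_zero, mul_zero, zero_mul, Real.exp_zero, one_mul, mul_one, hsinw] at hre him
  -- cos(ε ωt π) = -1 hence sin(ε ωt π) = 0
  have hcos1 : Real.cos (ε * ωt * π) = -1 := by linarith
  have hsin0 : Real.sin (ε * ωt * π) = 0 := by
    have hpc := Real.sin_sq_add_cos_sq (ε * ωt * π)
    have : Real.sin (ε * ωt * π) ^ 2 = 0 := by nlinarith
    exact sq_eq_zero_iff.mp this
  rw [hsin0] at him
  -- him : -(ε*B*ωt) + B * sk * (-1)^kt = 0 (roughly)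
  have hs : sk * (-1:ℝ) ^ kt = ε * ωt := by
    have hB0 : B ≠ 0 := ne_of_lt hB
    have : B * (sk * (-1:ℝ) ^ kt - ε * ωt) = 0 := by ring_nf; ring_nf at him; linarith
    rcases mul_eq_zero.mp this with h1 | h1
    · exact absurd h1 hB0
    · linarith
  have hsval : sk * (-1:ℝ) ^ kt = (-1:ℝ) ^ (k + kt) := by rw [hskdef, pow_add]
  have hpos : 0 < ε * ωt := mul_pos hε hw0
  have heven : Even (k + kt) := by
    rcases Nat.even_or_odd (k + kt) with he | ho
    · exact he
    · rw [hsval, ho.neg_one_pow] at hs; linarith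
  refine ⟨rfl, by rw [← hs, hsval, heven.neg_one_pow], ?_⟩
  have := Nat.even_iff.mp heven
  omega
end

section
/- Let k be a nonnegative integer, ω_k := (k + 1/2)·π, ε := 1/ω_k, and let B ≠ 0 be real. (i) If μ = μ_R + i·ω_k with μ_R real satisfies ψ(μ, ε, B) := −ε·B·μ − (−1)^k·B·exp(−μ) + (1/2)·(1 + exp(−π·ε·μ)) = 0, then μ_R = 0. (ii) The complex derivative ∂ψ/∂μ = −ε·B + (−1)^k·B·exp(−μ) − (π/2)·ε·exp(−π·ε·μ) is nonzero at μ = i·ω_k; hence the trivial Hopf eigenvalue μ = i·ω_k is an algebraically simple root of ψ(·, ε, B). -/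
open Real

/-- The trivial Hopf eigenvalue `μ = i ω_k` at `ε = 1/ω_k`: (i) any root of
`ψ(·,ε,B)` on the line `Im μ = ω_k` has vanishing real part; (ii) the μ-derivative of `ψ`
does not vanish at `μ = i ω_k`, so the root is algebraically simple. -/
theorem stmt_14 (k : ℕ) (ωk ε B : ℝ)
    (hωk : ωk = ((k : ℝ) + 1/2) * π) (hε : ε = 1/ωk) (hB : B ≠ 0)
    (ψ : ℂ → ℂ)
    (hψ : ∀ μ, ψ μ = -(ε:ℂ) * (B:ℂ) * μ - (-1:ℂ)^k * (B:ℂ) * Complex.exp (-μ)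
          + (1/2) * (1 + Complex.exp (-((π*ε : ℝ):ℂ) * μ))) :
    (∀ μR : ℝ, ψ ((μR : ℂ) + (ωk : ℂ) * Complex.I) = 0 → μR = 0) ∧
    (-(ε:ℂ) * (B:ℂ) + (-1:ℂ)^k * (B:ℂ) * Complex.exp (-((ωk : ℂ) * Complex.I))
      - ((π/2 : ℝ):ℂ) * (ε:ℂ) * Complex.exp (-((π*ε : ℝ):ℂ) * ((ωk : ℂ) * Complex.I)) ≠ 0) := by
  have hω0 : ωk ≠ 0 := by
    rw [hωk]
    positivity
  have hεω : ε * ωk = 1 := by rw [hε]; field_simp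
  have hcos : Real.cos ωk = 0 := by
    have : ωk = (k : ℝ) * π + π/2 := by rw [hωk]; ring
    rw [this, Real.cos_add, Real.cos_pi_div_two, Real.sin_pi_div_two,
      Real.sin_nat_mul_pi]
    ring
  have hsin : Real.sin ωk = (-1)^k := by
    have : ωk = (k : ℝ) * π + π/2 := by rw [hωk]; ring
    have hck : Real.cos ((k:ℝ)*π) = (-1)^k := by
      simpa using Real.cos_nat_mul_pi_sub 0 k
    rw [this, Real.sin_add, Real.cos_pi_div_two, Real.sin_pi_div_two, hck]
    ring
  have E1 : Complex.exp (-((ωk:ℂ) * Complex.I)) = -Complex.I * (-1:ℂ)^k := by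
    have : -((ωk:ℂ) * Complex.I) = (-ωk : ℂ) * Complex.I := by ring
    rw [this, Complex.exp_mul_I]
    simp [Complex.cos_neg, Complex.sin_neg, ← Complex.ofReal_cos, ← Complex.ofReal_sin,
      hcos, hsin]
    ring
  have hπε : π * ε * ωk = π := by
    rw [mul_assoc, hεω, mul_one]
  have E2 : Complex.exp (-((π*ε : ℝ):ℂ) * ((ωk:ℂ) * Complex.I)) = -1 := by
    have : -((π*ε : ℝ):ℂ) * ((ωk:ℂ) * Complex.I) = (-(π*ε*ωk) : ℝ) * Complex.I := by
      push_cast; ring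
    rw [this, hπε, Complex.exp_mul_I]
    simp [← Complex.ofReal_cos, ← Complex.ofReal_sin, Real.cos_pi, Real.sin_pi]
  have hc2 : ((-1:ℂ)^k) * ((-1:ℂ)^k) = 1 := by
    rw [← pow_add, ← two_mul, pow_mul]; norm_num
  have pk : ((-1:ℂ))^k = (((-1:ℝ)^k : ℝ):ℂ) := by push_cast; ring
  constructor
  · intro μR h
    rw [hψ] at h
    have Eμ : Complex.exp (-((μR : ℂ) + (ωk : ℂ) * Complex.I))
        = Complex.exp (-(μR:ℂ)) * (-Complex.I * (-1:ℂ)^k) := by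
      rw [neg_add, Complex.exp_add, E1]
    have Eπ : Complex.exp (-((π*ε : ℝ):ℂ) * ((μR : ℂ) + (ωk : ℂ) * Complex.I))
        = Complex.exp (-((π*ε*μR : ℝ):ℂ)) * (-1) := by
      have h2 : -((π*ε : ℝ):ℂ) * ((μR : ℂ) + (ωk : ℂ) * Complex.I)
          = (-((π*ε*μR : ℝ):ℂ)) + (-((π*ε : ℝ):ℂ) * ((ωk:ℂ) * Complex.I)) := by
        push_cast; ring
      rw [h2, Complex.exp_add, E2]
    rw [Eμ, Eπ] at h
    have key : ((-(ε*B*μR) + (1 - Real.exp (-(π*ε*μR)))/2 : ℝ) : ℂ)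
        + ((B * Real.exp (-μR) - ε*B*ωk : ℝ) : ℂ) * Complex.I = 0 := by
      push_cast at h ⊢
      linear_combination h - Complex.I * (B:ℂ) * Complex.exp (-(μR:ℂ)) * hc2
    have him := congrArg Complex.im key
    simp only [Complex.add_im, Complex.ofReal_im, Complex.mul_im, Complex.ofReal_re,
      Complex.I_im, Complex.I_re, Complex.zero_im, mul_zero, mul_one, zero_add,
      zero_mul, add_zero] at him
    have hY : B * (Real.exp (-μR) - 1) = 0 := by
      linear_combination him + B * hεω
    have : Real.exp (-μR) = 1 := by
      rcases mul_eq_zero.mp hY with h' | h'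
      · exact absurd h' hB
      · linarith
    have : -μR = 0 := Real.exp_injective (by rw [this, Real.exp_zero])
    linarith
  · intro h
    rw [E1, E2] at h
    have key : ((-(ε*B) + π*ε/2 : ℝ) : ℂ) + ((-B : ℝ) : ℂ) * Complex.I = 0 := by
      push_cast at h ⊢
      linear_combination h + Complex.I * (B:ℂ) * hc2
    have him := congrArg Complex.im key
    simp only [Complex.add_im, Complex.ofReal_im, Complex.mul_im, Complex.ofReal_re,
      Complex.I_im, Complex.I_re, Complex.zero_im, mul_zero, mul_one, zero_add,
      zero_mul, add_zero] at him
    exact hB (by linarith)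
end

section
/- Let k, k̃ be nonnegative integers, ε > 0, and let μ = μ_R + i·ω̃ be complex with μ_R real and ω̃ = (k̃ + 1/2)·π. If ε·μ + (−1)^k·exp(−μ) = 0, then μ_R = 0, ε = 1/ω̃ (so μ = i·(k̃+1/2)π), and k̃ ≡ k (mod 2). -/
open Real

/-- Trapping for the uncontrolled characteristic equation `ε μ + (-1)^k e^{-μ} = 0`:
eigenvalues with `Im μ = (k̃+1/2)π` satisfy `μ_R = 0`, `ε = 1/ω̃` and `k̃ ≡ k (mod 2)`. -/
theorem stmt_15 (k kt : ℕ) (ε : ℝ) (hε : 0 < ε)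
    (μR ωt : ℝ) (hωt : ωt = ((kt : ℝ) + 1/2) * π)
    (μ : ℂ) (hμ : μ = (μR : ℂ) + (ωt : ℂ) * Complex.I)
    (h : (ε:ℂ) * μ + (-1:ℂ)^k * Complex.exp (-μ) = 0) :
    μR = 0 ∧ ε = 1/ωt ∧ kt % 2 = k % 2 := by
  have h1 : ωt = (kt : ℝ) * π + π/2 := by rw [hωt]; ring
  have hωtpos : 0 < ωt := by
    rw [h1]; positivity
  have hcos : Real.cos ωt = 0 := by
    rw [h1, Real.cos_add_pi_div_two, Real.sin_nat_mul_pi, neg_zero]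
  have hsin : Real.sin ωt = (-1:ℝ)^kt := by
    rw [h1, Real.sin_add_pi_div_two]
    have := Real.cos_nat_mul_pi_sub 0 kt
    simpa using this
  have hk : ((-1:ℂ))^k = (((-1:ℝ)^k : ℝ) : ℂ) := by push_cast; ring
  rw [hμ, hk] at h
  rw [Complex.ext_iff] at h
  simp only [Complex.add_re, Complex.add_im, Complex.mul_re, Complex.mul_im,
    Complex.ofReal_re, Complex.ofReal_im, Complex.I_re, Complex.I_im,
    Complex.exp_re, Complex.exp_im, Complex.neg_re, Complex.neg_im,
    Complex.zero_re, Complex.zero_im] at h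
  obtain ⟨hre, him⟩ := h
  simp [Real.cos_neg, Real.sin_neg, hcos, hsin] at hre him
  -- hre : ε * μR = 0
  have hμR : μR = 0 := by
    rcases hre with h' | h'
    · exact absurd h' (ne_of_gt hε)
    · exact h'
  subst hμR
  simp [Real.exp_zero] at him
  -- him : ε * ωt + (-1)^k * -(-1)^kt = 0  (some form)
  have key : ε * ωt = (-1:ℝ)^k * (-1:ℝ)^kt := by linarith [him]
  have hpos : 0 < ε * ωt := mul_pos hε hωtpos
  have hsq : ((-1:ℝ)^k * (-1:ℝ)^kt) = 1 ∨ ((-1:ℝ)^k * (-1:ℝ)^kt) = -1 := by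
    rcases Nat.even_or_odd k with hk' | hk' <;> rcases Nat.even_or_odd kt with hkt' | hkt' <;>
      simp [hk'.neg_one_pow, hkt'.neg_one_pow, Odd.neg_one_pow]
  have hone : ((-1:ℝ)^k * (-1:ℝ)^kt) = 1 := by
    rcases hsq with h' | h'
    · exact h'
    · rw [key, h'] at hpos; linarith
  have hε1 : ε * ωt = 1 := by rw [key, hone]
  refine ⟨rfl, ?_, ?_⟩
  · field_simp at hε1 ⊢
    linarith [hε1]
  · -- parity
    by_contra hne
    have : ((-1:ℝ)^k * (-1:ℝ)^kt) = -1 := by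
      rcases Nat.even_or_odd k with hk' | hk' <;> rcases Nat.even_or_odd kt with hkt' | hkt'
      · obtain ⟨a, ha⟩ := hk'; obtain ⟨b, hb⟩ := hkt'
        exact absurd (by omega : kt % 2 = k % 2) hne
      · simp [hk'.neg_one_pow, hkt'.neg_one_pow]
      · simp [hk'.neg_one_pow, hkt'.neg_one_pow]
      · obtain ⟨a, ha⟩ := hk'; obtain ⟨b, hb⟩ := hkt'
        exact absurd (by omega : kt % 2 = k % 2) hne
    rw [this] at hone; linarith
end

section
/- Let k be an integer, ε, B, ω̃ real with B ≠ 0, and suppose ψ(i·ω̃, ε, B) = 0, where ψ(μ, ε, B) := −ε·B·μ − (−1)^k·B·exp(−μ) + (1/2)·(1 + exp(−π·ε·μ)). Define ψ_ε(μ) := −μ·(B + (π/2)·exp(−π·ε·μ)) and ψ_B(μ) := −ε·μ − (−1)^k·exp(−μ) (the partial derivatives of ψ with respect to ε and B). Then −B·Im( conj(ψ_ε(i·ω̃)) · ψ_B(i·ω̃) ) = ω̃·(B + π/2)·cos²(π·ε·ω̃/2). -/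
open Real

/- On the imaginary axis `z := exp(-iπεω̃)` lies on the unit circle, and the characteristic
equation says exactly `B · ψ_B(iω̃) = -(1 + z)/2`. Hence `-B · conj(ψ_ε) · ψ_B` equals
`(iω̃/2) (B + (π/2) z̄)(1 + z)`, whose imaginary part is `(ω̃/2)(B + π/2)(1 + Re z)` because
`z̄ z = 1`; finally `1 + cos θ = 2 cos²(θ/2)`. -/

open Complex ComplexConjugate in
theorem re_add_mul_conj_mul_one_add {z : ℂ} (hz : normSq z = 1) (b a : ℝ) :
    ((b + a * conj z) * (1 + z)).re = (b + a) * (1 + z.re) := by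
  have hre : (conj z * z).re = 1 := by rw [mul_comm, mul_conj, ofReal_re, hz]
  have expand : (b + a * conj z) * (1 + z) = b + b * z + a * conj z + a * (conj z * z) := by ring
  rw [expand]
  simp only [add_re, re_ofReal_mul, ofReal_re, conj_re, hre]
  ring

/-- Jacobian determinant identity at purely imaginary eigenvalues: if `ψ(iω̃,ε,B) = 0` then
`-B · Im(conj(ψ_ε(iω̃)) · ψ_B(iω̃)) = ω̃ (B + π/2) cos²(πεω̃/2)`. -/
theorem stmt_17 (k : ℤ) (ε B ωt : ℝ) (hB : B ≠ 0)
    (ψε ψB : ℂ → ℂ)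
    (hψε : ∀ μ, ψε μ = -μ * ((B:ℂ) + ((π/2 : ℝ):ℂ) * Complex.exp (-((π*ε : ℝ):ℂ)*μ)))
    (hψB : ∀ μ, ψB μ = -(ε:ℂ)*μ - (-1:ℂ)^k * Complex.exp (-μ))
    (h : -(ε:ℂ)*(B:ℂ)*((ωt:ℂ)*Complex.I)
         - (-1:ℂ)^k*(B:ℂ)*Complex.exp (-((ωt:ℂ)*Complex.I))
         + (1/2)*(1 + Complex.exp (-((π*ε : ℝ):ℂ)*((ωt:ℂ)*Complex.I))) = 0) :
    -B * ((starRingEnd ℂ) (ψε ((ωt:ℂ)*Complex.I)) * ψB ((ωt:ℂ)*Complex.I)).im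
      = ωt * (B + π/2) * (Real.cos (π*ε*ωt/2))^2 := by
  set z := Complex.exp (-((π*ε : ℝ):ℂ)*((ωt:ℂ)*Complex.I)) with hz
  have hz_arg : -((π*ε : ℝ):ℂ)*((ωt:ℂ)*Complex.I) = ((-(π*ε*ωt) : ℝ) : ℂ) * Complex.I := by
    push_cast; ring
  have hz_normSq : Complex.normSq z = 1 := by
    rw [Complex.normSq_eq_norm_sq, hz, hz_arg, Complex.norm_exp_ofReal_mul_I, one_pow]
  have hz_re : z.re = Real.cos (π*ε*ωt) := by
    rw [hz, hz_arg, Complex.exp_ofReal_mul_I_re, Real.cos_neg]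
  have hψB_eq : ψB ((ωt:ℂ)*Complex.I) = -(1 + z) / (2 * B) := by
    rw [hψB, eq_div_iff (by exact_mod_cast mul_ne_zero two_ne_zero hB)]
    linear_combination (2 : ℂ) * h
  have hprod : (starRingEnd ℂ) (ψε ((ωt:ℂ)*Complex.I)) * ψB ((ωt:ℂ)*Complex.I)
      = ((-ωt / (2 * B) : ℝ) : ℂ) *
          (Complex.I * ((B + ((π/2 : ℝ):ℂ) * (starRingEnd ℂ) z) * (1 + z))) := by
    rw [hψε, hψB_eq, ← hz]
    simp only [map_mul, map_add, map_neg, Complex.conj_ofReal, Complex.conj_I]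
    push_cast
    field_simp
  rw [hprod, Complex.im_ofReal_mul, Complex.I_mul_im, re_add_mul_conj_mul_one_add hz_normSq,
    hz_re, Real.cos_sq, show 2 * (π*ε*ωt/2) = π*ε*ωt by ring]
  field_simp
end

section
/- Let k ≥ 1 be an integer, ε := 1/((k + 1/2)·π) (so that 0 < π·ε < 1), let B ≤ π/2 and ω̃ be real, and suppose (−1)^k·B·cos(ω̃) = cos²(π·ε·ω̃/2). Then the real part of ∂ψ/∂μ at μ = i·ω̃, namely Re(−ε·B + (−1)^k·B·exp(−i·ω̃) − (π/2)·ε·exp(−i·π·ε·ω̃)), equals ε·(π/2 − B) + (1 − π·ε)·cos²(π·ε·ω̃/2); in particular it is strictly positive whenever B < π/2 or cos(π·ε·ω̃/2) ≠ 0. Hence every such purely imaginary eigenvalue is an algebraically simple root of ψ(·, ε, B). -/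
/-!
On the imaginary axis `exp(-iω̃)` and `exp(-iπεω̃)` contribute `cos ω̃` and `cos(πεω̃)` to the real
part. The eigenvalue condition replaces `(-1)^k B cos ω̃` by `cos²(πεω̃/2)`, and the double-angle
formula writes `cos(πεω̃) = 2cos²(πεω̃/2) - 1`, which gives the closed form. For `k ≥ 1` we have
`0 < πε = 1/(k + 1/2) < 1`, so both summands of the closed form are nonnegative and one of them is
positive under either alternative.
-/

open Real

lemma Complex.re_ofReal_mul_exp_neg_I_mul (a x : ℝ) :
    ((a : ℂ) * Complex.exp (-(Complex.I * x))).re = a * Real.cos x := by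
  have hexp : -(Complex.I * x) = ((-x : ℝ) : ℂ) * Complex.I := by push_cast; ring
  rw [Complex.re_ofReal_mul, hexp, Complex.exp_ofReal_mul_I_re, Real.cos_neg]

lemma pi_mul_one_div_mul_pi_lt_one {x : ℝ} (hx : 1 < x) : π * (1 / (x * π)) < 1 := by
  rw [mul_one_div, div_mul_cancel_right₀ pi_ne_zero, inv_lt_one₀ (by linarith)]
  exact hx

lemma add_mul_sq_pos_of_lt_or_ne {ε B c : ℝ} (hε : 0 < ε) (hπε : π * ε < 1) (hB : B ≤ π / 2)
    (h : B < π / 2 ∨ c ≠ 0) : 0 < ε * (π / 2 - B) + (1 - π * ε) * c ^ 2 := by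
  rcases h with hB' | hc
  · have : 0 < ε * (π / 2 - B) := mul_pos hε (by linarith)
    have : 0 ≤ (1 - π * ε) * c ^ 2 := mul_nonneg (by linarith) (sq_nonneg c)
    linarith
  · have : 0 ≤ ε * (π / 2 - B) := mul_nonneg hε.le (by linarith)
    have : 0 < (1 - π * ε) * c ^ 2 := mul_pos (by linarith) (by positivity)
    linarith

/-- Real part of `∂ψ/∂μ` at a purely imaginary eigenvalue `μ = iω̃`: it equals
`ε(π/2 - B) + (1 - πε) cos²(πεω̃/2)` and is strictly positive whenever `B < π/2` or
`cos(πεω̃/2) ≠ 0`; hence such eigenvalues are algebraically simple. -/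
theorem stmt_18 (k : ℕ) (hk : 1 ≤ k) (ε B ωt : ℝ)
    (hε : ε = 1/(((k : ℝ)+1/2)*π)) (hB : B ≤ π/2)
    (h : (-1:ℝ)^k * B * Real.cos ωt = (Real.cos (π*ε*ωt/2))^2) :
    (-(ε:ℂ)*(B:ℂ) + (-1:ℂ)^k*(B:ℂ)*Complex.exp (-(Complex.I*(ωt:ℂ)))
      - ((π/2 : ℝ):ℂ)*(ε:ℂ)*Complex.exp (-(Complex.I*((π*ε*ωt : ℝ):ℂ)))).re
      = ε*(π/2 - B) + (1 - π*ε)*(Real.cos (π*ε*ωt/2))^2 ∧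
    ((B < π/2 ∨ Real.cos (π*ε*ωt/2) ≠ 0) →
      0 < ε*(π/2 - B) + (1 - π*ε)*(Real.cos (π*ε*ωt/2))^2) := by
  have hre : (-(ε:ℂ)*(B:ℂ) + (-1:ℂ)^k*(B:ℂ)*Complex.exp (-(Complex.I*(ωt:ℂ)))
      - ((π/2 : ℝ):ℂ)*(ε:ℂ)*Complex.exp (-(Complex.I*((π*ε*ωt : ℝ):ℂ)))).re
      = -ε*B + (-1)^k*B*Real.cos ωt - π/2*ε*Real.cos (π*ε*ωt) := by
    have hcast : (-(ε:ℂ)*(B:ℂ) + (-1:ℂ)^k*(B:ℂ)*Complex.exp (-(Complex.I*(ωt:ℂ)))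
        - ((π/2 : ℝ):ℂ)*(ε:ℂ)*Complex.exp (-(Complex.I*((π*ε*ωt : ℝ):ℂ))))
        = ((-ε*B : ℝ) : ℂ) + (((-1)^k*B : ℝ) : ℂ) * Complex.exp (-(Complex.I*(ωt:ℂ)))
          - ((π/2*ε : ℝ) : ℂ) * Complex.exp (-(Complex.I*((π*ε*ωt : ℝ):ℂ))) := by
      push_cast; ring
    rw [hcast, Complex.sub_re, Complex.add_re, Complex.ofReal_re,
      Complex.re_ofReal_mul_exp_neg_I_mul, Complex.re_ofReal_mul_exp_neg_I_mul]
  have hcos : Real.cos (π*ε*ωt) = 2 * Real.cos (π*ε*ωt/2) ^ 2 - 1 := by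
    rw [← Real.cos_two_mul]; ring_nf
  refine ⟨by rw [hre, h, hcos]; ring, add_mul_sq_pos_of_lt_or_ne ?_ ?_ hB⟩
  · rw [hε]; positivity
  · have hk' : (1 : ℝ) ≤ k := by exact_mod_cast hk
    rw [hε]
    exact pi_mul_one_div_mul_pi_lt_one (by linarith)
end
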